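/- arXiv:2310.19514 — 9 statements merged into one kernel-verified Lean document; each statement's English description precedes it below -/
import Mathlib

section
/- Let M be a matching, let φ be 1-feasible with respect to M, and let P = (v_0, v_1, …, v_{2ℓ+1}) be an augmenting path with respect to M. Then the value of P, defined as V(P) = Σ_{i=0}^{ℓ} (c(v_{2i}, v_{2i+1}) + 1) − Σ_{j=0}^{ℓ−1} c(v_{2j+2}, v_{2j+1}), satisfies V(P) ≥ φ(v_0) + φ(v_{2ℓ+1}). -/
/-- If `M` is a matching on the complete bipartite graph with parts
`V0`, `V1`, `φ` is 1-feasible with respect to `M`, and `v 0, v 1, …, v (2ℓ+1)` is an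
augmenting path with respect to `M`, then the value
`V(P) = Σ_{i=0}^{ℓ} (c(v_{2i}, v_{2i+1}) + 1) − Σ_{j=0}^{ℓ−1} c(v_{2j+2}, v_{2j+1})`
satisfies `V(P) ≥ φ(v 0) + φ(v (2ℓ+1))`. -/
theorem stmt_0 {α : Type*} [DecidableEq α] (V0 V1 : Finset α) (n : ℕ)
    (hdisj : Disjoint V0 V1) (hV0card : V0.card = n) (hV1card : V1.card = n)
    (c : α → α → ℤ) (M : Finset (α × α))
    -- `M` is a matching:
    (hMsub : M ⊆ V0 ×ˢ V1)
    (hMinj1 : ∀ p ∈ M, ∀ q ∈ M, p.1 = q.1 → p = q)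
    (hMinj2 : ∀ p ∈ M, ∀ q ∈ M, p.2 = q.2 → p = q)
    -- `φ` is 1-feasible with respect to `M`:
    (φ : α → ℤ)
    (hfeas : ∀ u ∈ V0, ∀ w ∈ V1, φ u + φ w ≤ c u w + 1)
    (htight : ∀ p ∈ M, φ p.1 + φ p.2 = c p.1 p.2)
    -- `(v 0, …, v (2ℓ+1))` is an augmenting path with respect to `M`:
    (ℓ : ℕ) (v : ℕ → α)
    (hdistinct : ∀ i < 2 * ℓ + 2, ∀ j < 2 * ℓ + 2, v i = v j → i = j)
    (hfree0 : v 0 ∈ V0 ∧ ∀ p ∈ M, p.1 ≠ v 0 ∧ p.2 ≠ v 0)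
    (hfree1 : v (2 * ℓ + 1) ∈ V1 ∧ ∀ p ∈ M, p.1 ≠ v (2 * ℓ + 1) ∧ p.2 ≠ v (2 * ℓ + 1))
    (hunmatched : ∀ i ≤ ℓ,
      v (2 * i) ∈ V0 ∧ v (2 * i + 1) ∈ V1 ∧ (v (2 * i), v (2 * i + 1)) ∉ M)
    (hmatched : ∀ j < ℓ, (v (2 * j + 2), v (2 * j + 1)) ∈ M) :
    φ (v 0) + φ (v (2 * ℓ + 1)) ≤
      (∑ i ∈ Finset.range (ℓ + 1), (c (v (2 * i)) (v (2 * i + 1)) + 1)) -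
        ∑ j ∈ Finset.range ℓ, c (v (2 * j + 2)) (v (2 * j + 1)) := by
  have h1 : ∑ i ∈ Finset.range (ℓ + 1), (φ (v (2 * i)) + φ (v (2 * i + 1))) ≤
      ∑ i ∈ Finset.range (ℓ + 1), (c (v (2 * i)) (v (2 * i + 1)) + 1) := by
    apply Finset.sum_le_sum
    intro i hi
    obtain ⟨h0, h1, _⟩ := hunmatched i (Nat.lt_succ_iff.mp (Finset.mem_range.mp hi))
    exact hfeas _ h0 _ h1
  have h2 : ∑ j ∈ Finset.range ℓ, c (v (2 * j + 2)) (v (2 * j + 1)) =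
      ∑ j ∈ Finset.range ℓ, (φ (v (2 * j + 2)) + φ (v (2 * j + 1))) := by
    apply Finset.sum_congr rfl
    intro j hj
    exact (htight _ (hmatched j (Finset.mem_range.mp hj))).symm
  rw [h2]
  have hA : ∑ i ∈ Finset.range (ℓ + 1), φ (v (2 * i)) =
      φ (v 0) + ∑ i ∈ Finset.range ℓ, φ (v (2 * i + 2)) := by
    rw [Finset.sum_range_succ' (fun i => φ (v (2 * i))) ℓ]
    rw [show 2 * 0 = 0 from rfl, add_comm]
    congr 1
  have hB : ∑ i ∈ Finset.range (ℓ + 1), φ (v (2 * i + 1)) =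
      (∑ i ∈ Finset.range ℓ, φ (v (2 * i + 1))) + φ (v (2 * ℓ + 1)) := by
    rw [Finset.sum_range_succ]
  have hsplit : ∑ i ∈ Finset.range (ℓ + 1), (φ (v (2 * i)) + φ (v (2 * i + 1))) =
      (∑ i ∈ Finset.range (ℓ + 1), φ (v (2 * i))) +
        ∑ i ∈ Finset.range (ℓ + 1), φ (v (2 * i + 1)) := Finset.sum_add_distrib
  have hsplit2 : ∑ j ∈ Finset.range ℓ, (φ (v (2 * j + 2)) + φ (v (2 * j + 1))) =
      (∑ j ∈ Finset.range ℓ, φ (v (2 * j + 2))) +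
        ∑ j ∈ Finset.range ℓ, φ (v (2 * j + 1)) := Finset.sum_add_distrib
  linarith [h1]
end

section
/- Let M be a matching, let φ be 1-feasible with respect to M, and let (v_0, v_1, …, v_{2ℓ−1}) be an alternating cycle with respect to M, i.e., a sequence of distinct vertices with v_{2i} ∈ V0 and v_{2i+1} ∈ V1, such that (v_{2i}, v_{2i+1}) ∈ (V0 × V1) \ M for each 0 ≤ i ≤ ℓ−1, (v_{2j+2}, v_{2j+1}) ∈ M for each 0 ≤ j ≤ ℓ−2, and (v_0, v_{2ℓ−1}) ∈ M. Then Σ_{i=0}^{ℓ−1} (c(v_{2i}, v_{2i+1}) + 1) − Σ_{j=0}^{ℓ−2} c(v_{2j+2}, v_{2j+1}) − c(v_0, v_{2ℓ−1}) ≥ 0. -/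
/-- If `M` is a matching on the complete bipartite graph with parts
`V0`, `V1`, `φ` is 1-feasible with respect to `M`, and `v 0, v 1, …, v (2ℓ−1)` is an
alternating cycle with respect to `M`, then
`Σ_{i=0}^{ℓ−1} (c(v_{2i}, v_{2i+1}) + 1) − Σ_{j=0}^{ℓ−2} c(v_{2j+2}, v_{2j+1}) − c(v_0, v_{2ℓ−1}) ≥ 0`. -/
theorem stmt_1 {α : Type*} [DecidableEq α] (V0 V1 : Finset α) (n : ℕ)
    (hdisj : Disjoint V0 V1) (hV0card : V0.card = n) (hV1card : V1.card = n)
    (c : α → α → ℤ) (M : Finset (α × α))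
    -- `M` is a matching:
    (hMsub : M ⊆ V0 ×ˢ V1)
    (hMinj1 : ∀ p ∈ M, ∀ q ∈ M, p.1 = q.1 → p = q)
    (hMinj2 : ∀ p ∈ M, ∀ q ∈ M, p.2 = q.2 → p = q)
    -- `φ` is 1-feasible with respect to `M`:
    (φ : α → ℤ)
    (hfeas : ∀ u ∈ V0, ∀ w ∈ V1, φ u + φ w ≤ c u w + 1)
    (htight : ∀ p ∈ M, φ p.1 + φ p.2 = c p.1 p.2)
    -- `(v 0, …, v (2ℓ−1))` is an alternating cycle with respect to `M`:
    (ℓ : ℕ) (hℓ : 1 ≤ ℓ) (v : ℕ → α)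
    (hdistinct : ∀ i < 2 * ℓ, ∀ j < 2 * ℓ, v i = v j → i = j)
    (hsides : ∀ i < ℓ, v (2 * i) ∈ V0 ∧ v (2 * i + 1) ∈ V1)
    (hunmatched : ∀ i < ℓ, (v (2 * i), v (2 * i + 1)) ∉ M)
    (hmatched : ∀ j < ℓ - 1, (v (2 * j + 2), v (2 * j + 1)) ∈ M)
    (hclose : (v 0, v (2 * ℓ - 1)) ∈ M) :
    0 ≤ (∑ i ∈ Finset.range ℓ, (c (v (2 * i)) (v (2 * i + 1)) + 1)) -
        (∑ j ∈ Finset.range (ℓ - 1), c (v (2 * j + 2)) (v (2 * j + 1))) -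
        c (v 0) (v (2 * ℓ - 1)) := by
  obtain ⟨k, rfl⟩ : ∃ k, ℓ = k + 1 := ⟨ℓ - 1, (Nat.succ_pred_eq_of_pos hℓ).symm⟩
  have hb : ∑ i ∈ Finset.range (k + 1), (φ (v (2 * i)) + φ (v (2 * i + 1))) ≤
      ∑ i ∈ Finset.range (k + 1), (c (v (2 * i)) (v (2 * i + 1)) + 1) := by
    apply Finset.sum_le_sum
    intro i hi
    exact hfeas _ ((hsides i (Finset.mem_range.mp hi)).1) _
      ((hsides i (Finset.mem_range.mp hi)).2)
  have hm : ∑ j ∈ Finset.range (k + 1 - 1), c (v (2 * j + 2)) (v (2 * j + 1)) =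
      ∑ j ∈ Finset.range k, (φ (v (2 * j + 2)) + φ (v (2 * j + 1))) := by
    simp only [Nat.add_sub_cancel]
    exact (Finset.sum_congr rfl fun j hj =>
      htight _ (hmatched j (by simpa using Finset.mem_range.mp hj))).symm
  have hc : c (v 0) (v (2 * (k + 1) - 1)) = φ (v 0) + φ (v (2 * (k + 1) - 1)) :=
    (htight _ hclose).symm
  have hsplit : ∑ i ∈ Finset.range (k + 1), (φ (v (2 * i)) + φ (v (2 * i + 1))) =
      (∑ j ∈ Finset.range k, (φ (v (2 * j + 2)) + φ (v (2 * j + 1)))) +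
        (φ (v 0) + φ (v (2 * (k + 1) - 1))) := by
    rw [Finset.sum_add_distrib, Finset.sum_add_distrib,
      Finset.sum_range_succ' (fun i => φ (v (2 * i))),
      Finset.sum_range_succ (fun i => φ (v (2 * i + 1)))]
    have h1 : ∀ i, 2 * (i + 1) = 2 * i + 2 := fun i => by ring
    have h2 : 2 * (k + 1) - 1 = 2 * k + 1 := by omega
    have h3 : 2 * k + 2 - 1 = 2 * k + 1 := by omega
    simp only [h2, h1, h3, Nat.mul_zero]
    ring
  omega
end

section
/- Let M be a matching and let φ be 1-feasible with respect to M, with φ(w) ≥ 0 for every M-free vertex w. Then c(M) ≤ Σ_{w ∈ V0 ∪ V1} φ(w) ≤ c(M') + n for every perfect matching M'. -/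
/-- If `M` is a matching on the complete bipartite graph with parts
`V0`, `V1` (`|V0| = |V1| = n`), `φ` is 1-feasible with respect to `M`, and `φ(w) ≥ 0`
for every `M`-free vertex `w`, then
`c(M) ≤ Σ_{w ∈ V0 ∪ V1} φ(w) ≤ c(M') + n` for every perfect matching `M'`. -/
theorem stmt_4 {α : Type*} [DecidableEq α] (V0 V1 : Finset α) (n : ℕ)
    (hdisj : Disjoint V0 V1) (hV0card : V0.card = n) (hV1card : V1.card = n)
    (c : α → α → ℤ) (M : Finset (α × α))
    -- `M` is a matching:
    (hMsub : M ⊆ V0 ×ˢ V1)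
    (hMinj1 : ∀ p ∈ M, ∀ q ∈ M, p.1 = q.1 → p = q)
    (hMinj2 : ∀ p ∈ M, ∀ q ∈ M, p.2 = q.2 → p = q)
    -- `φ` is 1-feasible with respect to `M`, nonnegative on `M`-free vertices:
    (φ : α → ℤ)
    (hfeas : ∀ u ∈ V0, ∀ w ∈ V1, φ u + φ w ≤ c u w + 1)
    (htight : ∀ p ∈ M, φ p.1 + φ p.2 = c p.1 p.2)
    (hfreenonneg : ∀ w ∈ V0 ∪ V1, (∀ p ∈ M, p.1 ≠ w ∧ p.2 ≠ w) → 0 ≤ φ w) :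
    (∑ p ∈ M, c p.1 p.2) ≤ (∑ w ∈ V0 ∪ V1, φ w) ∧
      ∀ M' : Finset (α × α),
        M' ⊆ V0 ×ˢ V1 →
        (∀ p ∈ M', ∀ q ∈ M', p.1 = q.1 → p = q) →
        (∀ p ∈ M', ∀ q ∈ M', p.2 = q.2 → p = q) →
        M'.card = n →
        (∑ w ∈ V0 ∪ V1, φ w) ≤ (∑ p ∈ M', c p.1 p.2) + n := by
  constructor
  · -- lower bound
    set S0 := M.image Prod.fst with hS0def
    set S1 := M.image Prod.snd with hS1def
    have hS0 : S0 ⊆ V0 := by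
      intro x hx
      rcases Finset.mem_image.1 hx with ⟨p, hp, rfl⟩
      exact (Finset.mem_product.1 (hMsub hp)).1
    have hS1 : S1 ⊆ V1 := by
      intro x hx
      rcases Finset.mem_image.1 hx with ⟨p, hp, rfl⟩
      exact (Finset.mem_product.1 (hMsub hp)).2
    have hTsub : S0 ∪ S1 ⊆ V0 ∪ V1 := Finset.union_subset_union hS0 hS1
    have hTdisj : Disjoint S0 S1 := hdisj.mono hS0 hS1
    have h0 : ∑ x ∈ S0, φ x = ∑ p ∈ M, φ p.1 :=
      Finset.sum_image (fun p hp q hq h => hMinj1 p hp q hq h)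
    have h1 : ∑ x ∈ S1, φ x = ∑ p ∈ M, φ p.2 :=
      Finset.sum_image (fun p hp q hq h => hMinj2 p hp q hq h)
    have hcM : ∑ p ∈ M, c p.1 p.2 = ∑ x ∈ S0 ∪ S1, φ x := by
      rw [Finset.sum_union hTdisj, h0, h1, ← Finset.sum_add_distrib]
      exact (Finset.sum_congr rfl fun p hp => (htight p hp)).symm
    have hsplit : ∑ x ∈ S0 ∪ S1, φ x + ∑ x ∈ (V0 ∪ V1) \ (S0 ∪ S1), φ x
        = ∑ w ∈ V0 ∪ V1, φ w := by
      rw [add_comm]; exact Finset.sum_sdiff hTsub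
    have hrest : 0 ≤ ∑ x ∈ (V0 ∪ V1) \ (S0 ∪ S1), φ x := by
      apply Finset.sum_nonneg
      intro w hw
      rcases Finset.mem_sdiff.1 hw with ⟨hw1, hw2⟩
      refine hfreenonneg w hw1 fun p hp => ⟨?_, ?_⟩
      · rintro rfl; exact hw2 (Finset.mem_union_left _ (Finset.mem_image_of_mem _ hp))
      · rintro rfl; exact hw2 (Finset.mem_union_right _ (Finset.mem_image_of_mem _ hp))
    omega
  · intro M' hsub hinj1 hinj2 hcard
    have hS0 : M'.image Prod.fst = V0 := by
      apply Finset.eq_of_subset_of_card_le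
      · intro x hx
        rcases Finset.mem_image.1 hx with ⟨p, hp, rfl⟩
        exact (Finset.mem_product.1 (hsub hp)).1
      · rw [Finset.card_image_of_injOn (fun p hp q hq h => hinj1 p hp q hq h), hcard, hV0card]
    have hS1 : M'.image Prod.snd = V1 := by
      apply Finset.eq_of_subset_of_card_le
      · intro x hx
        rcases Finset.mem_image.1 hx with ⟨p, hp, rfl⟩
        exact (Finset.mem_product.1 (hsub hp)).2
      · rw [Finset.card_image_of_injOn (fun p hp q hq h => hinj2 p hp q hq h), hcard, hV1card]
    have h0 : ∑ x ∈ V0, φ x = ∑ p ∈ M', φ p.1 := by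
      rw [← hS0]; exact Finset.sum_image (fun p hp q hq h => hinj1 p hp q hq h)
    have h1 : ∑ x ∈ V1, φ x = ∑ p ∈ M', φ p.2 := by
      rw [← hS1]; exact Finset.sum_image (fun p hp q hq h => hinj2 p hp q hq h)
    have key : ∑ w ∈ V0 ∪ V1, φ w = ∑ p ∈ M', (φ p.1 + φ p.2) := by
      rw [Finset.sum_union hdisj, h0, h1, Finset.sum_add_distrib]
    rw [key]
    calc ∑ p ∈ M', (φ p.1 + φ p.2) ≤ ∑ p ∈ M', (c p.1 p.2 + 1) := by
          apply Finset.sum_le_sum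
          intro p hp
          have := Finset.mem_product.1 (hsub hp)
          exact hfeas p.1 this.1 p.2 this.2
      _ = (∑ p ∈ M', c p.1 p.2) + n := by
          rw [Finset.sum_add_distrib, Finset.sum_const, hcard]
          push_cast; ring
end

section
/- Let M be a matching and let φ be 1-feasible with respect to M. Let P_1, …, P_s be pairwise vertex-disjoint augmenting paths with respect to M all of whose edges (both the matched and the unmatched ones) are eligible with respect to M and φ. Let M' = M ⊕ E(P_1 ∪ … ∪ P_s) be the matching obtained by augmenting M along all these paths (⊕ denotes symmetric difference with the set of edges lying on the paths), and define φ'(v) = φ(v) − 1 for every v ∈ V1 lying on one of the paths and φ'(v) = φ(v) for every other vertex. Then M' is a matching and φ' is 1-feasible with respect to M'. -/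
/-- Let `M` be a matching and `φ` 1-feasible w.r.t. `M`. Let
`P 0, …, P (s-1)` be pairwise vertex-disjoint augmenting paths w.r.t. `M` (path `t`
being `v t 0, …, v t (2 * ℓ t + 1)`) all of whose edges (matched and unmatched) are
eligible w.r.t. `M` and `φ`. Let `M'` be the symmetric difference of `M` with the set
`P` of edges lying on the paths, and let `φ'` equal `φ - 1` on the `V1`-vertices lying
on the paths and `φ` elsewhere. Then `M'` is a matching and `φ'` is 1-feasible w.r.t.
`M'`. -/
theorem stmt_5 {α : Type*} [DecidableEq α] (V0 V1 : Finset α) (n : ℕ)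
    (hdisj : Disjoint V0 V1) (hV0card : V0.card = n) (hV1card : V1.card = n)
    (c : α → α → ℤ) (M : Finset (α × α))
    -- `M` is a matching:
    (hMsub : M ⊆ V0 ×ˢ V1)
    (hMinj1 : ∀ p ∈ M, ∀ q ∈ M, p.1 = q.1 → p = q)
    (hMinj2 : ∀ p ∈ M, ∀ q ∈ M, p.2 = q.2 → p = q)
    -- `φ` is 1-feasible with respect to `M`:
    (φ : α → ℤ)
    (hfeas : ∀ u ∈ V0, ∀ w ∈ V1, φ u + φ w ≤ c u w + 1)
    (htight : ∀ p ∈ M, φ p.1 + φ p.2 = c p.1 p.2)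
    -- `s` augmenting paths with respect to `M`; path `t` has vertices
    -- `v t 0, v t 1, …, v t (2 * ℓ t + 1)`:
    (s : ℕ) (ℓ : ℕ → ℕ) (v : ℕ → ℕ → α)
    (hdistinct : ∀ t < s, ∀ i < 2 * ℓ t + 2, ∀ j < 2 * ℓ t + 2, v t i = v t j → i = j)
    (hfree0 : ∀ t < s, v t 0 ∈ V0 ∧ ∀ p ∈ M, p.1 ≠ v t 0 ∧ p.2 ≠ v t 0)
    (hfree1 : ∀ t < s, v t (2 * ℓ t + 1) ∈ V1 ∧
      ∀ p ∈ M, p.1 ≠ v t (2 * ℓ t + 1) ∧ p.2 ≠ v t (2 * ℓ t + 1))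
    (hunmatched : ∀ t < s, ∀ i ≤ ℓ t,
      v t (2 * i) ∈ V0 ∧ v t (2 * i + 1) ∈ V1 ∧ (v t (2 * i), v t (2 * i + 1)) ∉ M)
    (hmatched : ∀ t < s, ∀ j < ℓ t, (v t (2 * j + 2), v t (2 * j + 1)) ∈ M)
    -- all edges of the paths are eligible with respect to `M` and `φ`:
    (helig_unmatched : ∀ t < s, ∀ i ≤ ℓ t,
      φ (v t (2 * i)) + φ (v t (2 * i + 1)) = c (v t (2 * i)) (v t (2 * i + 1)) + 1)
    (helig_matched : ∀ t < s, ∀ j < ℓ t,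
      φ (v t (2 * j + 2)) + φ (v t (2 * j + 1)) = c (v t (2 * j + 2)) (v t (2 * j + 1)))
    -- the paths are pairwise vertex-disjoint:
    (hpairdisj : ∀ t < s, ∀ t' < s, t ≠ t' →
      ∀ i < 2 * ℓ t + 2, ∀ j < 2 * ℓ t' + 2, v t i ≠ v t' j)
    -- `P` is the set of edges lying on the paths:
    (P : Finset (α × α))
    (hP : P = (Finset.range s).biUnion (fun t =>
      ((Finset.range (ℓ t + 1)).image (fun i => (v t (2 * i), v t (2 * i + 1)))) ∪
      ((Finset.range (ℓ t)).image (fun j => (v t (2 * j + 2), v t (2 * j + 1))))))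
    -- `M' = M ⊕ P` and `φ'` is the updated potential:
    (M' : Finset (α × α)) (hM' : M' = (M \ P) ∪ (P \ M))
    (φ' : α → ℤ)
    (hφ'dec : ∀ w ∈ V1, (∃ t < s, ∃ i < 2 * ℓ t + 2, w = v t i) → φ' w = φ w - 1)
    (hφ'eq : ∀ w, ¬(w ∈ V1 ∧ ∃ t < s, ∃ i < 2 * ℓ t + 2, w = v t i) → φ' w = φ w) :
    -- `M'` is a matching:
    (M' ⊆ V0 ×ˢ V1 ∧
        (∀ p ∈ M', ∀ q ∈ M', p.1 = q.1 → p = q) ∧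
        (∀ p ∈ M', ∀ q ∈ M', p.2 = q.2 → p = q)) ∧
    -- `φ'` is 1-feasible with respect to `M'`:
    ((∀ u ∈ V0, ∀ w ∈ V1, φ' u + φ' w ≤ c u w + 1) ∧
        (∀ p ∈ M', φ' p.1 + φ' p.2 = c p.1 p.2)) := by
  classical
  -- membership in P
  have hPiff : ∀ p : α × α, p ∈ P ↔ ∃ t < s,
      (∃ i ≤ ℓ t, p = (v t (2 * i), v t (2 * i + 1))) ∨
      (∃ j < ℓ t, p = (v t (2 * j + 2), v t (2 * j + 1))) := by
    intro p
    subst hP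
    simp only [Finset.mem_biUnion, Finset.mem_union, Finset.mem_image, Finset.mem_range,
      Nat.lt_succ_iff, eq_comm]
  have hnotV1 : ∀ x ∈ V0, x ∉ V1 := fun x hx => Finset.disjoint_left.mp hdisj hx
  -- matched path edges are in P; unmatched ones too
  have hmatchedP : ∀ t < s, ∀ j < ℓ t, (v t (2 * j + 2), v t (2 * j + 1)) ∈ P := by
    intro t ht j hj
    exact (hPiff _).mpr ⟨t, ht, Or.inr ⟨j, hj, rfl⟩⟩
  have hunmatchedP : ∀ t < s, ∀ i ≤ ℓ t, (v t (2 * i), v t (2 * i + 1)) ∈ P := by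
    intro t ht i hi
    exact (hPiff _).mpr ⟨t, ht, Or.inl ⟨i, hi, rfl⟩⟩
  -- if a vertex of p ∈ M lies on a path, then p ∈ P
  have hMonpath1 : ∀ p ∈ M, ∀ t < s, ∀ i < 2 * ℓ t + 2, p.1 = v t i → p ∈ P := by
    intro p hp t ht i hi hpi
    have hp1V0 : p.1 ∈ V0 := (Finset.mem_product.mp (hMsub hp)).1
    rcases Nat.even_or_odd i with ⟨k, hk⟩ | ⟨k, hk⟩
    · -- i = 2k
      have hkle : k ≤ ℓ t := by omega
      rcases Nat.eq_zero_or_pos k with rfl | hkpos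
      · exact absurd (by simpa [hk] using hpi) ((hfree0 t ht).2 p hp).1
      · obtain ⟨j, rfl⟩ : ∃ j, k = j + 1 := ⟨k - 1, by omega⟩
        have hjlt : j < ℓ t := by omega
        have hq := hmatched t ht j hjlt
        have : p = (v t (2 * j + 2), v t (2 * j + 1)) := by
          apply hMinj1 p hp _ hq
          simp only [hpi]
          congr 1
          omega
        rw [this]; exact hmatchedP t ht j hjlt
    · -- i = 2k + 1, impossible since p.1 ∈ V0
      have hkle : k ≤ ℓ t := by omega
      have : v t (2 * k + 1) ∈ V1 := (hunmatched t ht k hkle).2.1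
      have : p.1 ∈ V1 := by rw [hpi, hk]; simpa [two_mul] using this
      exact absurd this (hnotV1 _ hp1V0)
  have hMonpath2 : ∀ p ∈ M, ∀ t < s, ∀ i < 2 * ℓ t + 2, p.2 = v t i → p ∈ P := by
    intro p hp t ht i hi hpi
    have hp2V1 : p.2 ∈ V1 := (Finset.mem_product.mp (hMsub hp)).2
    rcases Nat.even_or_odd i with ⟨k, hk⟩ | ⟨k, hk⟩
    · -- i = 2k, impossible since p.2 ∈ V1
      have hkle : k ≤ ℓ t := by omega
      have : v t (2 * k) ∈ V0 := (hunmatched t ht k hkle).1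
      have : p.2 ∈ V0 := by rw [hpi, hk]; simpa [two_mul] using this
      exact absurd hp2V1 (hnotV1 _ this)
    · -- i = 2k + 1
      have hkle : k ≤ ℓ t := by omega
      rcases Nat.lt_or_ge k (ℓ t) with hklt | hkge
      · have hq := hmatched t ht k hklt
        have : p = (v t (2 * k + 2), v t (2 * k + 1)) := by
          apply hMinj2 p hp _ hq
          simp only [hpi, hk]
        rw [this]; exact hmatchedP t ht k hklt
      · -- k = ℓ t : free vertex, contradiction
        have hkeq : k = ℓ t := le_antisymm hkle hkge
        have : p.2 = v t (2 * ℓ t + 1) := by rw [hpi, hk, hkeq]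
        exact absurd this ((hfree1 t ht).2 p hp).2
  -- characterization of M'
  have hM'iff : ∀ p : α × α, p ∈ M' ↔ (p ∈ M ∧ p ∉ P) ∨
      ∃ t < s, ∃ i ≤ ℓ t, p = (v t (2 * i), v t (2 * i + 1)) := by
    intro p
    subst hM'
    simp only [Finset.mem_union, Finset.mem_sdiff]
    constructor
    · rintro (⟨hpM, hpP⟩ | ⟨hpP, hpM⟩)
      · exact Or.inl ⟨hpM, hpP⟩
      · rcases (hPiff p).mp hpP with ⟨t, ht, ⟨i, hi, rfl⟩ | ⟨j, hj, rfl⟩⟩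
        · exact Or.inr ⟨t, ht, i, hi, rfl⟩
        · exact absurd (hmatched t ht j hj) hpM
    · rintro (⟨hpM, hpP⟩ | ⟨t, ht, i, hi, rfl⟩)
      · exact Or.inl ⟨hpM, hpP⟩
      · exact Or.inr ⟨hunmatchedP t ht i hi, (hunmatched t ht i hi).2.2⟩
  -- vertices of M \ P are not on any path
  have hMP1 : ∀ p ∈ M, p ∉ P → ∀ t < s, ∀ i < 2 * ℓ t + 2, p.1 ≠ v t i := by
    intro p hp hpP t ht i hi h
    exact hpP (hMonpath1 p hp t ht i hi h)
  have hMP2 : ∀ p ∈ M, p ∉ P → ∀ t < s, ∀ i < 2 * ℓ t + 2, p.2 ≠ v t i := by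
    intro p hp hpP t ht i hi h
    exact hpP (hMonpath2 p hp t ht i hi h)
  refine ⟨⟨?_, ?_, ?_⟩, ?_, ?_⟩
  · -- M' ⊆ V0 ×ˢ V1
    intro p hp
    rcases (hM'iff p).mp hp with ⟨hpM, _⟩ | ⟨t, ht, i, hi, rfl⟩
    · exact hMsub hpM
    · exact Finset.mem_product.mpr ⟨(hunmatched t ht i hi).1, (hunmatched t ht i hi).2.1⟩
  · -- injectivity on first coordinates
    intro p hp q hq h1
    rcases (hM'iff p).mp hp with ⟨hpM, hpP⟩ | ⟨t, ht, i, hi, rfl⟩ <;>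
      rcases (hM'iff q).mp hq with ⟨hqM, hqP⟩ | ⟨t', ht', i', hi', rfl⟩
    · exact hMinj1 p hpM q hqM h1
    · exact absurd h1 (hMP1 p hpM hpP t' ht' (2 * i') (by omega))
    · exact absurd h1.symm (hMP1 q hqM hqP t ht (2 * i) (by omega))
    · simp only at h1
      by_cases htt : t = t'
      · subst htt
        have := hdistinct t ht (2 * i) (by omega) (2 * i') (by omega) h1
        have : i = i' := by omega
        subst this; rfl
      · exact absurd h1 (hpairdisj t ht t' ht' htt (2 * i) (by omega) (2 * i') (by omega))
  · -- injectivity on second coordinates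
    intro p hp q hq h2
    rcases (hM'iff p).mp hp with ⟨hpM, hpP⟩ | ⟨t, ht, i, hi, rfl⟩ <;>
      rcases (hM'iff q).mp hq with ⟨hqM, hqP⟩ | ⟨t', ht', i', hi', rfl⟩
    · exact hMinj2 p hpM q hqM h2
    · exact absurd h2 (hMP2 p hpM hpP t' ht' (2 * i' + 1) (by omega))
    · exact absurd h2.symm (hMP2 q hqM hqP t ht (2 * i + 1) (by omega))
    · simp only at h2
      by_cases htt : t = t'
      · subst htt
        have := hdistinct t ht (2 * i + 1) (by omega) (2 * i' + 1) (by omega) h2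
        have : i = i' := by omega
        subst this; rfl
      · exact absurd h2 (hpairdisj t ht t' ht' htt (2 * i + 1) (by omega) (2 * i' + 1) (by omega))
  · -- feasibility of φ'
    intro u hu w hw
    have hu' : φ' u = φ u := hφ'eq u (by rintro ⟨huV1, -⟩; exact hnotV1 u hu huV1)
    have hw' : φ' w ≤ φ w := by
      by_cases h : ∃ t < s, ∃ i < 2 * ℓ t + 2, w = v t i
      · rw [hφ'dec w hw h]; omega
      · rw [hφ'eq w (by rintro ⟨-, h'⟩; exact h h')]
    have := hfeas u hu w hw
    omega
  · -- tightness of φ' on M'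
    intro p hp
    rcases (hM'iff p).mp hp with ⟨hpM, hpP⟩ | ⟨t, ht, i, hi, rfl⟩
    · have hp1V0 : p.1 ∈ V0 := (Finset.mem_product.mp (hMsub hpM)).1
      have h1 : φ' p.1 = φ p.1 :=
        hφ'eq _ (by rintro ⟨hV1, -⟩; exact hnotV1 _ hp1V0 hV1)
      have h2 : φ' p.2 = φ p.2 := by
        apply hφ'eq
        rintro ⟨-, t, ht, i, hi, hpi⟩
        exact hMP2 p hpM hpP t ht i hi hpi
      rw [h1, h2]; exact htight p hpM
    · have h1 : φ' (v t (2 * i)) = φ (v t (2 * i)) :=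
        hφ'eq _ (by rintro ⟨hV1, -⟩; exact hnotV1 _ (hunmatched t ht i hi).1 hV1)
      have h2' : φ' (v t (2 * i + 1)) = φ (v t (2 * i + 1)) - 1 :=
        hφ'dec _ (hunmatched t ht i hi).2.1 ⟨t, ht, 2 * i + 1, by omega, rfl⟩
      have := helig_unmatched t ht i hi
      simp only [h1, h2']
      omega
end

section
/- Let M be a matching, let φ be 1-feasible with respect to M, and let F ⊆ V0 ∪ V1 be a set of vertices such that for every (u,v) ∈ M, u ∈ F if and only if v ∈ F. Define φ'(u) = φ(u) + 1 for u ∈ F ∩ V0, φ'(v) = φ(v) − 1 for v ∈ F ∩ V1, and φ' = φ on all other vertices. Then: (a) φ'(u) + φ'(v) = c(u,v) for every (u,v) ∈ M; and (b) every (u,v) ∈ V0 × V1 for which it is not the case that u ∈ F and v ∉ F satisfies φ'(u) + φ'(v) ≤ c(u,v) + 1. In particular, every edge that violates the relaxed dual constraint after the update has its V0-endpoint in F and its V1-endpoint outside F. -/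
/-- Let `M` be a matching, `φ` 1-feasible w.r.t. `M`, and
`F ⊆ V0 ∪ V1` a set of vertices such that for every `(u,v) ∈ M`, `u ∈ F ↔ v ∈ F`.
Define `φ'` by adding 1 on `F ∩ V0`, subtracting 1 on `F ∩ V1`, and leaving `φ`
unchanged elsewhere. Then (a) `φ'(u) + φ'(v) = c(u,v)` for every `(u,v) ∈ M`, and
(b) every `(u,v) ∈ V0 × V1` for which it is not the case that `u ∈ F` and `v ∉ F`
satisfies `φ'(u) + φ'(v) ≤ c(u,v) + 1`. -/
theorem stmt_6 {α : Type*} [DecidableEq α] (V0 V1 : Finset α) (n : ℕ)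
    (hdisj : Disjoint V0 V1) (hV0card : V0.card = n) (hV1card : V1.card = n)
    (c : α → α → ℤ) (M : Finset (α × α))
    -- `M` is a matching:
    (hMsub : M ⊆ V0 ×ˢ V1)
    (hMinj1 : ∀ p ∈ M, ∀ q ∈ M, p.1 = q.1 → p = q)
    (hMinj2 : ∀ p ∈ M, ∀ q ∈ M, p.2 = q.2 → p = q)
    -- `φ` is 1-feasible with respect to `M`:
    (φ : α → ℤ)
    (hfeas : ∀ u ∈ V0, ∀ w ∈ V1, φ u + φ w ≤ c u w + 1)
    (htight : ∀ p ∈ M, φ p.1 + φ p.2 = c p.1 p.2)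
    -- the vertex set `F`, matched pairs lie on the same side of `F`:
    (F : Finset α) (hFsub : F ⊆ V0 ∪ V1)
    (hFmatch : ∀ p ∈ M, (p.1 ∈ F ↔ p.2 ∈ F))
    -- the updated potential `φ'`:
    (φ' : α → ℤ)
    (hφ'0 : ∀ u ∈ F ∩ V0, φ' u = φ u + 1)
    (hφ'1 : ∀ w ∈ F ∩ V1, φ' w = φ w - 1)
    (hφ'eq : ∀ w, w ∉ F ∩ V0 → w ∉ F ∩ V1 → φ' w = φ w) :
    -- (a): tightness on `M` is preserved
    (∀ p ∈ M, φ' p.1 + φ' p.2 = c p.1 p.2) ∧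
    -- (b): relaxed dual constraints hold except possibly when `u ∈ F` and `v ∉ F`
    (∀ u ∈ V0, ∀ w ∈ V1, ¬(u ∈ F ∧ w ∉ F) → φ' u + φ' w ≤ c u w + 1) := by
  have key0 : ∀ u ∈ V0, φ' u = if u ∈ F then φ u + 1 else φ u := by
    intro u hu
    by_cases h : u ∈ F
    · simp only [h, if_true]
      exact hφ'0 u (Finset.mem_inter.mpr ⟨h, hu⟩)
    · simp only [h, if_false]
      exact hφ'eq u (fun hc => h (Finset.mem_inter.mp hc).1)
        (fun hc => h (Finset.mem_inter.mp hc).1)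
  have key1 : ∀ w ∈ V1, φ' w = if w ∈ F then φ w - 1 else φ w := by
    intro w hw
    by_cases h : w ∈ F
    · simp only [h, if_true]
      exact hφ'1 w (Finset.mem_inter.mpr ⟨h, hw⟩)
    · simp only [h, if_false]
      exact hφ'eq w (fun hc => h (Finset.mem_inter.mp hc).1)
        (fun hc => h (Finset.mem_inter.mp hc).1)
  constructor
  · intro p hp
    have hpV := hMsub hp
    rw [Finset.mem_product] at hpV
    rw [key0 p.1 hpV.1, key1 p.2 hpV.2]
    have := hFmatch p hp
    by_cases h : p.1 ∈ F
    · simp only [h, this.mp h, if_true]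
      linarith [htight p hp]
    · have h2 : p.2 ∉ F := fun hc => h (this.mpr hc)
      rw [if_neg h, if_neg h2]
      exact htight p hp
  · intro u hu w hw hne
    rw [key0 u hu, key1 w hw]
    have := hfeas u hu w hw
    by_cases h1 : u ∈ F <;> by_cases h2 : w ∈ F <;>
      simp only [h1, h2, if_true, if_false] <;> first | linarith | exact absurd ⟨h1, h2⟩ hne
end

section
/- Let the edge costs satisfy c(u,v) ≥ 0 for all (u,v) ∈ V0 × V1. Let M be a matching, let φ be 1-feasible with respect to M, and let T ≥ 0 be an integer such that φ(u) = T for every M-free u ∈ V0 and φ(v) = 0 for every M-free v ∈ V1. Then for every perfect matching M', T · |{u ∈ V0 : u is M-free}| ≤ n + c(M'). -/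
/-- Suppose `c ≥ 0` on `V0 × V1`, `M` is a matching, `φ` is 1-feasible
w.r.t. `M`, and `T ≥ 0` is an integer with `φ(u) = T` for every `M`-free `u ∈ V0` and
`φ(v) = 0` for every `M`-free `v ∈ V1`. Then for every perfect matching `M'`,
`T · |{u ∈ V0 : u is M-free}| ≤ n + c(M')`. -/
theorem stmt_7 {α : Type*} [DecidableEq α] (V0 V1 : Finset α) (n : ℕ)
    (hdisj : Disjoint V0 V1) (hV0card : V0.card = n) (hV1card : V1.card = n)
    (c : α → α → ℤ)
    (hc : ∀ u ∈ V0, ∀ w ∈ V1, 0 ≤ c u w)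
    (M : Finset (α × α))
    -- `M` is a matching:
    (hMsub : M ⊆ V0 ×ˢ V1)
    (hMinj1 : ∀ p ∈ M, ∀ q ∈ M, p.1 = q.1 → p = q)
    (hMinj2 : ∀ p ∈ M, ∀ q ∈ M, p.2 = q.2 → p = q)
    -- `φ` is 1-feasible with respect to `M`:
    (φ : α → ℤ)
    (hfeas : ∀ u ∈ V0, ∀ w ∈ V1, φ u + φ w ≤ c u w + 1)
    (htight : ∀ p ∈ M, φ p.1 + φ p.2 = c p.1 p.2)
    -- potentials of free vertices:
    (T : ℤ) (hT : 0 ≤ T)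
    (hfree0 : ∀ u ∈ V0, (∀ p ∈ M, p.1 ≠ u ∧ p.2 ≠ u) → φ u = T)
    (hfree1 : ∀ w ∈ V1, (∀ p ∈ M, p.1 ≠ w ∧ p.2 ≠ w) → φ w = 0)
    -- `M'` is a perfect matching:
    (M' : Finset (α × α))
    (hM'sub : M' ⊆ V0 ×ˢ V1)
    (hM'inj1 : ∀ p ∈ M', ∀ q ∈ M', p.1 = q.1 → p = q)
    (hM'inj2 : ∀ p ∈ M', ∀ q ∈ M', p.2 = q.2 → p = q)
    (hM'card : M'.card = n) :
    T * ((V0.filter (fun u => ∀ p ∈ M, p.1 ≠ u ∧ p.2 ≠ u)).card : ℤ) ≤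
      (n : ℤ) + ∑ p ∈ M', c p.1 p.2 := by
  classical
  set free : α → Prop := fun u => ∀ p ∈ M, p.1 ≠ u ∧ p.2 ≠ u with hfreedef
  -- images of M' cover V0 and V1
  have hfst' : M'.image Prod.fst = V0 := by
    apply Finset.eq_of_subset_of_card_le
    · intro u hu
      obtain ⟨p, hp, rfl⟩ := Finset.mem_image.mp hu
      exact (Finset.mem_product.mp (hM'sub hp)).1
    · rw [hV0card, Finset.card_image_of_injOn]
      · exact le_of_eq hM'card.symm
      · intro p hp q hq h; exact hM'inj1 p hp q hq h
  have hsnd' : M'.image Prod.snd = V1 := by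
    apply Finset.eq_of_subset_of_card_le
    · intro u hu
      obtain ⟨p, hp, rfl⟩ := Finset.mem_image.mp hu
      exact (Finset.mem_product.mp (hM'sub hp)).2
    · rw [hV1card, Finset.card_image_of_injOn]
      · exact le_of_eq hM'card.symm
      · intro p hp q hq h; exact hM'inj2 p hp q hq h
  have hsumV0' : ∑ u ∈ V0, φ u = ∑ p ∈ M', φ p.1 := by
    rw [← hfst', Finset.sum_image (fun p hp q hq h => hM'inj1 p hp q hq h)]
  have hsumV1' : ∑ w ∈ V1, φ w = ∑ p ∈ M', φ p.2 := by
    rw [← hsnd', Finset.sum_image (fun p hp q hq h => hM'inj2 p hp q hq h)]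
  -- image of M under fst is the non-free part of V0, under snd nonfree part of V1
  have hN0 : M.image Prod.fst = V0.filter (fun u => ¬ free u) := by
    ext u
    simp only [Finset.mem_image, Finset.mem_filter, hfreedef]
    constructor
    · rintro ⟨p, hp, rfl⟩
      refine ⟨(Finset.mem_product.mp (hMsub hp)).1, ?_⟩
      intro h; exact (h p hp).1 rfl
    · rintro ⟨hu, h⟩
      push_neg at h
      obtain ⟨p, hp, hpe⟩ := h
      refine ⟨p, hp, ?_⟩
      by_cases h1 : p.1 = u
      · exact h1
      · exfalso
        have h2 := hpe h1
        have : p.2 ∈ V1 := (Finset.mem_product.mp (hMsub hp)).2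
        rw [h2] at this
        exact (Finset.disjoint_left.mp hdisj hu) this
  have hN1 : M.image Prod.snd = V1.filter (fun w => ¬ free w) := by
    ext w
    simp only [Finset.mem_image, Finset.mem_filter, hfreedef]
    constructor
    · rintro ⟨p, hp, rfl⟩
      refine ⟨(Finset.mem_product.mp (hMsub hp)).2, ?_⟩
      intro h; exact (h p hp).2 rfl
    · rintro ⟨hw, h⟩
      push_neg at h
      obtain ⟨p, hp, hpe⟩ := h
      refine ⟨p, hp, ?_⟩
      by_cases h2 : p.2 = w
      · exact h2
      · exfalso
        have h1 : p.1 = w := by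
          by_contra h1; exact h2 (hpe h1)
        have : p.1 ∈ V0 := (Finset.mem_product.mp (hMsub hp)).1
        rw [h1] at this
        exact (Finset.disjoint_left.mp hdisj this) hw
  have hsplit0 : ∑ u ∈ V0, φ u
      = ∑ u ∈ V0.filter (fun u => free u), φ u + ∑ p ∈ M, φ p.1 := by
    rw [show ∑ p ∈ M, φ p.1 = ∑ u ∈ V0.filter (fun u => ¬ free u), φ u by
      rw [← hN0, Finset.sum_image (fun p hp q hq h => hMinj1 p hp q hq h)]]
    exact (Finset.sum_filter_add_sum_filter_not V0 _ φ).symm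
  have hsplit1 : ∑ w ∈ V1, φ w
      = ∑ w ∈ V1.filter (fun w => free w), φ w + ∑ p ∈ M, φ p.2 := by
    rw [show ∑ p ∈ M, φ p.2 = ∑ w ∈ V1.filter (fun w => ¬ free w), φ w by
      rw [← hN1, Finset.sum_image (fun p hp q hq h => hMinj2 p hp q hq h)]]
    exact (Finset.sum_filter_add_sum_filter_not V1 _ φ).symm
  have hF0 : ∑ u ∈ V0.filter (fun u => free u), φ u
      = T * ((V0.filter (fun u => free u)).card : ℤ) := by
    rw [Finset.sum_congr rfl (fun u hu => by
      obtain ⟨h1, h2⟩ := Finset.mem_filter.mp hu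
      exact hfree0 u h1 h2)]
    simp [mul_comm]
  have hF1 : ∑ w ∈ V1.filter (fun w => free w), φ w = 0 := by
    apply Finset.sum_eq_zero
    intro w hw
    obtain ⟨h1, h2⟩ := Finset.mem_filter.mp hw
    exact hfree1 w h1 h2
  have hMnn : 0 ≤ ∑ p ∈ M, (φ p.1 + φ p.2) := by
    apply Finset.sum_nonneg
    intro p hp
    rw [htight p hp]
    obtain ⟨h1, h2⟩ := Finset.mem_product.mp (hMsub hp)
    exact hc _ h1 _ h2
  have key : T * ((V0.filter (fun u => free u)).card : ℤ)
      ≤ ∑ u ∈ V0, φ u + ∑ w ∈ V1, φ w := by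
    rw [hsplit0, hsplit1, hF0, hF1]
    have := hMnn
    rw [Finset.sum_add_distrib] at this
    linarith
  have final : ∑ u ∈ V0, φ u + ∑ w ∈ V1, φ w ≤ (n : ℤ) + ∑ p ∈ M', c p.1 p.2 := by
    rw [hsumV0', hsumV1', ← Finset.sum_add_distrib]
    have : ∑ p ∈ M', (φ p.1 + φ p.2) ≤ ∑ p ∈ M', (c p.1 p.2 + 1) := by
      apply Finset.sum_le_sum
      intro p hp
      obtain ⟨h1, h2⟩ := Finset.mem_product.mp (hM'sub hp)
      exact hfeas _ h1 _ h2
    have h2 : ∑ p ∈ M', (c p.1 p.2 + 1) = ∑ p ∈ M', c p.1 p.2 + (n : ℤ) := by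
      rw [Finset.sum_add_distrib, Finset.sum_const, hM'card]; push_cast; ring
    linarith
  exact key.trans final
end

section
/- Let G = (V0 ∪ V1, E) be a bipartite graph with |V0| = |V1| = n and nonnegative edge costs c, let 0 ≤ d ≤ n, and suppose G contains a matching of size n − d. Form the padded bipartite graph Ḡ with parts V̄0 = V0 ∪ D0 and V̄1 = V1 ∪ D1, where D0 and D1 are disjoint sets of d new dummy vertices each, whose edge set is E together with all pairs in D0 × V1 and V0 × D1, each such dummy edge having cost 1 (original edges keep their cost). Then Ḡ has a perfect matching, and the minimum cost of a perfect matching in Ḡ equals w_{n−d}(G, c) + 2d. -/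
/-- `M` is a matching of the bipartite graph with edge set `E`: a set of pairwise
vertex-disjoint edges of `E`. -/
def IsMatchingIn {α : Type*} (E M : Finset (α × α)) : Prop :=
  M ⊆ E ∧ (∀ p ∈ M, ∀ q ∈ M, p.1 = q.1 → p = q) ∧ (∀ p ∈ M, ∀ q ∈ M, p.2 = q.2 → p = q)

/-- The cost of a matching: the sum of the costs of its edges. -/
noncomputable def matchCost {α : Type*} (c : α × α → ℝ) (M : Finset (α × α)) : ℝ :=
  ∑ e ∈ M, c e

/-- `w_k(G, c)`: the minimum cost of a matching of size exactly `k` in the graph with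
edge set `E` and edge costs `c`. -/
noncomputable def minMatchCost {α : Type*} (E : Finset (α × α)) (c : α × α → ℝ) (k : ℕ) : ℝ :=
  sInf {x : ℝ | ∃ M : Finset (α × α), IsMatchingIn E M ∧ M.card = k ∧ x = matchCost c M}

/-!
A matching of size `n - d` in `G` leaves `d` vertices of each side uncovered; matching those to
the dummy vertices of the opposite side costs `2d` and gives a perfect matching of `Ḡ`.
Conversely, a perfect matching of `Ḡ` uses at most `d` edges at `D0` and at most `d` at `D1`,
while its original edges together with either kind of dummy edge have their ends in a side of
size `n`; counting forces exactly `d` dummy edges of each kind and `n - d` edges of `G`. So the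
two minima range over the same costs, shifted by `2d`.
-/

section

open Finset

variable {α : Type*}

namespace IsMatchingIn

variable {E E' M N : Finset (α × α)}

lemma iff_injOn : IsMatchingIn E M ↔
    M ⊆ E ∧ Set.InjOn Prod.fst (M : Set (α × α)) ∧ Set.InjOn Prod.snd (M : Set (α × α)) :=
  Iff.rfl

lemma injOn_fst (hM : IsMatchingIn E M) : Set.InjOn Prod.fst (M : Set (α × α)) :=
  (iff_injOn.1 hM).2.1

lemma injOn_snd (hM : IsMatchingIn E M) : Set.InjOn Prod.snd (M : Set (α × α)) :=
  (iff_injOn.1 hM).2.2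

lemma of_subset (hM : IsMatchingIn E M) (hNM : N ⊆ M) (hNE' : N ⊆ E') : IsMatchingIn E' N :=
  iff_injOn.2 ⟨hNE', hM.injOn_fst.mono hNM, hM.injOn_snd.mono hNM⟩

lemma card_le_of_subset_product (hM : IsMatchingIn E M) {S T : Finset α} (hMST : M ⊆ S ×ˢ T) :
    M.card ≤ S.card ∧ M.card ≤ T.card :=
  ⟨card_le_card_of_injOn Prod.fst (fun _ hp => (mem_product.1 (hMST hp)).1) hM.injOn_fst,
    card_le_card_of_injOn Prod.snd (fun _ hp => (mem_product.1 (hMST hp)).2) hM.injOn_snd⟩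

lemma card_image_fst [DecidableEq α] (hM : IsMatchingIn E M) : (M.image Prod.fst).card = M.card :=
  card_image_of_injOn hM.injOn_fst

lemma card_image_snd [DecidableEq α] (hM : IsMatchingIn E M) : (M.image Prod.snd).card = M.card :=
  card_image_of_injOn hM.injOn_snd

lemma union [DecidableEq α] (hM : IsMatchingIn E M) (hN : IsMatchingIn E' N)
    (hfst : Disjoint (M.image Prod.fst) (N.image Prod.fst))
    (hsnd : Disjoint (M.image Prod.snd) (N.image Prod.snd)) :
    IsMatchingIn (E ∪ E') (M ∪ N) := by
  have hMN : Disjoint (M : Set (α × α)) N := disjoint_coe.2 hfst.of_image_finset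
  refine iff_injOn.2 ⟨union_subset_union hM.1 hN.1, ?_, ?_⟩ <;> rw [coe_union, Set.injOn_union hMN]
  · exact ⟨hM.injOn_fst, hN.injOn_fst, fun p hp q hq =>
      hfst.forall_ne_finset (mem_image_of_mem _ hp) (mem_image_of_mem _ hq)⟩
  · exact ⟨hM.injOn_snd, hN.injOn_snd, fun p hp q hq =>
      hsnd.forall_ne_finset (mem_image_of_mem _ hp) (mem_image_of_mem _ hq)⟩

end IsMatchingIn

lemma exists_isMatchingIn_product [DecidableEq α] {s t : Finset α} (h : s.card = t.card) :
    ∃ P, IsMatchingIn (s ×ˢ t) P ∧ P.image Prod.fst = s ∧ P.image Prod.snd = t := by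
  let e := equivOfCardEq h
  refine ⟨s.attach.image fun x => (x.1, (e x).1), ⟨?_, ?_, ?_⟩, ?_, ?_⟩
  · intro p hp
    obtain ⟨x, -, rfl⟩ := mem_image.1 hp
    exact mem_product.2 ⟨x.2, (e x).2⟩
  · rintro _ hp _ hq h
    obtain ⟨x, -, rfl⟩ := mem_image.1 hp
    obtain ⟨y, -, rfl⟩ := mem_image.1 hq
    rw [Subtype.ext h]
  · rintro _ hp _ hq h
    obtain ⟨x, -, rfl⟩ := mem_image.1 hp
    obtain ⟨y, -, rfl⟩ := mem_image.1 hq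
    rw [e.injective (Subtype.ext h)]
  · rw [image_image]
    exact attach_image_val
  · ext y
    simp only [image_image, mem_image, mem_attach, true_and, Function.comp_apply]
    exact ⟨by rintro ⟨x, rfl⟩; exact (e x).2, fun hy => ⟨e.symm ⟨y, hy⟩, by simp⟩⟩

lemma exists_isMatchingIn_product_union [DecidableEq α] {s t s' t' : Finset α}
    (h : s.card = t.card) (h' : s'.card = t'.card) (hs : Disjoint s s') (ht : Disjoint t t') :
    ∃ R, IsMatchingIn (s ×ˢ t ∪ s' ×ˢ t') R ∧
      R.image Prod.fst = s ∪ s' ∧ R.image Prod.snd = t ∪ t' := by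
  obtain ⟨P, hP, hPfst, hPsnd⟩ := exists_isMatchingIn_product h
  obtain ⟨Q, hQ, hQfst, hQsnd⟩ := exists_isMatchingIn_product h'
  refine ⟨P ∪ Q, hP.union hQ (hPfst ▸ hQfst ▸ hs) (hPsnd ▸ hQsnd ▸ ht), ?_, ?_⟩
  · rw [image_union, hPfst, hQfst]
  · rw [image_union, hPsnd, hQsnd]

lemma matchCost_union_of_eq_one [DecidableEq α] {c c' : α × α → ℝ} {M R : Finset (α × α)}
    (hM : ∀ e ∈ M, c' e = c e) (hR : ∀ e ∈ R, c' e = 1) (hMR : Disjoint M R) :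
    matchCost c' (M ∪ R) = matchCost c M + R.card := by
  rw [matchCost, sum_union hMR, sum_congr rfl hM, sum_congr rfl hR, sum_const, nsmul_one]
  rfl

lemma minMatchCost_eq_add {E E' : Finset (α × α)} {c c' : α × α → ℝ} {k k' : ℕ} (a : ℝ)
    (hc : ∀ e ∈ E, 0 ≤ c e) (hE : ∃ M, IsMatchingIn E M ∧ M.card = k)
    (hto : ∀ M, IsMatchingIn E M → M.card = k →
      ∃ M', IsMatchingIn E' M' ∧ M'.card = k' ∧ matchCost c' M' = matchCost c M + a)
    (hfrom : ∀ M', IsMatchingIn E' M' → M'.card = k' →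
      ∃ M, IsMatchingIn E M ∧ M.card = k ∧ matchCost c' M' = matchCost c M + a) :
    minMatchCost E' c' k' = minMatchCost E c k + a := by
  set S := {x : ℝ | ∃ M, IsMatchingIn E M ∧ M.card = k ∧ x = matchCost c M}
  have hS : S.Nonempty := by
    obtain ⟨M, hM, hMk⟩ := hE
    exact ⟨_, M, hM, hMk, rfl⟩
  have hSbdd : BddBelow S := ⟨0, by
    rintro _ ⟨M, hM, -, rfl⟩
    exact sum_nonneg fun e he => hc e (hM.1 he)⟩
  have himage : {x : ℝ | ∃ M', IsMatchingIn E' M' ∧ M'.card = k' ∧ x = matchCost c' M'} =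
      OrderIso.addRight a '' S := by
    ext x
    constructor
    · rintro ⟨M', hM', hM'k, rfl⟩
      obtain ⟨M, hM, hMk, hcost⟩ := hfrom M' hM' hM'k
      exact ⟨_, ⟨M, hM, hMk, rfl⟩, hcost.symm⟩
    · rintro ⟨_, ⟨M, hM, hMk, rfl⟩, rfl⟩
      obtain ⟨M', hM', hM'k, hcost⟩ := hto M hM hMk
      exact ⟨M', hM', hM'k, hcost.symm⟩
  rw [minMatchCost, himage, ← (OrderIso.addRight a).map_csInf' hS hSbdd]
  rfl

section Padding

variable [DecidableEq α] {V0 V1 D0 D1 : Finset α} {n d : ℕ} {E : Finset (α × α)}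
  {c cbar : α × α → ℝ}

theorem exists_padded_matching (hV0 : V0.card = n) (hV1 : V1.card = n)
    (hD0 : D0.card = d) (hD1 : D1.card = d) (hdn : d ≤ n)
    (hD0V0 : Disjoint D0 V0) (hD1V1 : Disjoint D1 V1) (hE : E ⊆ V0 ×ˢ V1)
    (hcbarE : ∀ e ∈ E, cbar e = c e) (hcbarD : ∀ e ∈ D0 ×ˢ V1 ∪ V0 ×ˢ D1, cbar e = 1)
    {M : Finset (α × α)} (hM : IsMatchingIn E M) (hMcard : M.card = n - d) :
    ∃ Mb, IsMatchingIn (E ∪ D0 ×ˢ V1 ∪ V0 ×ˢ D1) Mb ∧ Mb.card = n + d ∧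
      matchCost cbar Mb = matchCost c M + 2 * d := by
  have hfstV0 : M.image Prod.fst ⊆ V0 :=
    image_subset_iff.2 fun p hp => (mem_product.1 (hE (hM.1 hp))).1
  have hsndV1 : M.image Prod.snd ⊆ V1 :=
    image_subset_iff.2 fun p hp => (mem_product.1 (hE (hM.1 hp))).2
  set B0 := V0 \ M.image Prod.fst
  set B1 := V1 \ M.image Prod.snd
  have hB0 : B0.card = d := by
    rw [card_sdiff_of_subset hfstV0, hM.card_image_fst]; omega
  have hB1 : B1.card = d := by
    rw [card_sdiff_of_subset hsndV1, hM.card_image_snd]; omega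
  have hD0B0 : Disjoint D0 B0 := hD0V0.mono_right sdiff_subset
  obtain ⟨R, hR, hRfst, hRsnd⟩ := exists_isMatchingIn_product_union (hD0.trans hB1.symm)
    (hB0.trans hD1.symm) hD0B0 (hD1V1.mono_right sdiff_subset).symm
  have hfst : Disjoint (M.image Prod.fst) (R.image Prod.fst) := by
    rw [hRfst]
    exact disjoint_union_right.2 ⟨(hD0V0.mono_right hfstV0).symm, disjoint_sdiff⟩
  have hsnd : Disjoint (M.image Prod.snd) (R.image Prod.snd) := by
    rw [hRsnd]
    exact disjoint_union_right.2 ⟨disjoint_sdiff, (hD1V1.mono_right hsndV1).symm⟩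
  have hMR : Disjoint M R := hfst.of_image_finset
  have hRcard : R.card = 2 * d := by
    rw [← hR.card_image_fst, hRfst, card_union_of_disjoint hD0B0, hD0, hB0, two_mul]
  have hdummy : D0 ×ˢ B1 ∪ B0 ×ˢ D1 ⊆ D0 ×ˢ V1 ∪ V0 ×ˢ D1 :=
    union_subset_union (product_subset_product_right sdiff_subset)
      (product_subset_product_left sdiff_subset)
  refine ⟨M ∪ R, ⟨?_, (hM.union hR hfst hsnd).2⟩, ?_, ?_⟩
  · rw [union_assoc]
    exact union_subset_union hM.1 (hR.1.trans hdummy)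
  · rw [card_union_of_disjoint hMR, hRcard, hMcard]
    omega
  · rw [matchCost_union_of_eq_one (fun e he => hcbarE e (hM.1 he))
      (fun e he => hcbarD e (hdummy (hR.1 he))) hMR, hRcard]
    push_cast
    ring

theorem exists_unpadded_matching (hV0 : V0.card = n) (hV1 : V1.card = n)
    (hD0 : D0.card = d) (hD1 : D1.card = d)
    (hD0V0 : Disjoint D0 V0) (hD1V1 : Disjoint D1 V1) (hE : E ⊆ V0 ×ˢ V1)
    (hcbarE : ∀ e ∈ E, cbar e = c e) (hcbarD : ∀ e ∈ D0 ×ˢ V1 ∪ V0 ×ˢ D1, cbar e = 1)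
    {Mb : Finset (α × α)} (hMb : IsMatchingIn (E ∪ D0 ×ˢ V1 ∪ V0 ×ˢ D1) Mb)
    (hMbcard : Mb.card = n + d) :
    ∃ M, IsMatchingIn E M ∧ M.card = n - d ∧ matchCost cbar Mb = matchCost c M + 2 * d := by
  set M := Mb ∩ E
  set P := Mb ∩ D0 ×ˢ V1
  set Q := Mb ∩ V0 ×ˢ D1
  have hsplit : Mb = M ∪ (P ∪ Q) := by
    rw [← inter_union_distrib_left, ← inter_union_distrib_left, ← union_assoc,
      inter_eq_left.2 hMb.1]
  have hEP : Disjoint E (D0 ×ˢ V1) :=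
    (disjoint_product.2 (Or.inl hD0V0.symm)).mono_left hE
  have hEQ : Disjoint E (V0 ×ˢ D1) :=
    (disjoint_product.2 (Or.inr hD1V1.symm)).mono_left hE
  have hPQ : Disjoint P Q :=
    (disjoint_product.2 (Or.inl hD0V0)).mono inter_subset_right inter_subset_right
  have hMP : Disjoint M P := hEP.mono inter_subset_right inter_subset_right
  have hMQ : Disjoint M Q := hEQ.mono inter_subset_right inter_subset_right
  have hbound : ∀ N ⊆ Mb, ∀ {S T : Finset α}, N ⊆ S ×ˢ T → N.card ≤ S.card ∧ N.card ≤ T.card :=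
    fun N hN _ _ => (hMb.of_subset hN hN).card_le_of_subset_product
  have hMV : M ⊆ V0 ×ˢ V1 := inter_subset_right.trans hE
  have hPcard : P.card ≤ d := hD0 ▸ (hbound P inter_subset_left inter_subset_right).1
  have hQcard : Q.card ≤ d := hD1 ▸ (hbound Q inter_subset_left inter_subset_right).2
  have hMQcard : M.card + Q.card ≤ n := by
    rw [← card_union_of_disjoint hMQ, ← hV0]
    refine (hbound _ (union_subset inter_subset_left inter_subset_left) (T := V1 ∪ D1) ?_).1
    exact union_subset (hMV.trans (product_subset_product_right subset_union_left))
      (inter_subset_right.trans (product_subset_product_right subset_union_right))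
  have hMPcard : M.card + P.card ≤ n := by
    rw [← card_union_of_disjoint hMP, ← hV1]
    refine (hbound _ (union_subset inter_subset_left inter_subset_left) (S := V0 ∪ D0) ?_).2
    exact union_subset (hMV.trans (product_subset_product_left subset_union_left))
      (inter_subset_right.trans (product_subset_product_left subset_union_right))
  have htotal : M.card + (P.card + Q.card) = n + d := by
    rw [← card_union_of_disjoint hPQ, ← card_union_of_disjoint
      (disjoint_union_right.2 ⟨hMP, hMQ⟩), ← hsplit, hMbcard]
  refine ⟨M, hMb.of_subset inter_subset_left inter_subset_right, by omega, ?_⟩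
  have hPQd : P.card + Q.card = 2 * d := by omega
  have hdummy : P ∪ Q ⊆ D0 ×ˢ V1 ∪ V0 ×ˢ D1 :=
    union_subset_union inter_subset_right inter_subset_right
  rw [hsplit, matchCost_union_of_eq_one (fun e he => hcbarE e (mem_inter.1 he).2)
    (fun e he => hcbarD e (hdummy he)) (disjoint_union_right.2 ⟨hMP, hMQ⟩),
    card_union_of_disjoint hPQ, hPQd]
  push_cast
  ring

end Padding

end

theorem stmt_8_general {α : Type*} [DecidableEq α] (V0 V1 D0 D1 : Finset α) (n d : ℕ)
    (hV0card : V0.card = n) (hV1card : V1.card = n)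
    (hD0card : D0.card = d) (hD1card : D1.card = d) (hdn : d ≤ n)
    (hD0V0 : Disjoint D0 V0) (hD1V1 : Disjoint D1 V1)
    (E : Finset (α × α)) (hE : E ⊆ V0 ×ˢ V1)
    (c : α × α → ℝ) (hc : ∀ e ∈ E, 0 ≤ c e)
    -- the padded graph `Ḡ`:
    (Ebar : Finset (α × α)) (hEbar : Ebar = E ∪ D0 ×ˢ V1 ∪ V0 ×ˢ D1)
    (cbar : α × α → ℝ)
    (hcbarE : ∀ e ∈ E, cbar e = c e)
    (hcbarD : ∀ e ∈ D0 ×ˢ V1 ∪ V0 ×ˢ D1, cbar e = 1)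
    -- `G` contains a matching of size `n − d`:
    (hmatch : ∃ M : Finset (α × α), IsMatchingIn E M ∧ M.card = n - d) :
    (∃ Mb : Finset (α × α), IsMatchingIn Ebar Mb ∧ Mb.card = n + d) ∧
      minMatchCost Ebar cbar (n + d) = minMatchCost E c (n - d) + 2 * d := by
  subst hEbar
  have pad := fun M (hM : IsMatchingIn E M) => exists_padded_matching hV0card hV1card hD0card
    hD1card hdn hD0V0 hD1V1 hE hcbarE hcbarD hM
  have unpad := fun Mb (hMb : IsMatchingIn _ Mb) => exists_unpadded_matching hV0card hV1card
    hD0card hD1card hD0V0 hD1V1 hE hcbarE hcbarD hMb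
  obtain ⟨M, hM, hMcard⟩ := hmatch
  obtain ⟨Mb, hMb, hMbcard, -⟩ := pad M hM hMcard
  exact ⟨⟨Mb, hMb, hMbcard⟩, minMatchCost_eq_add _ hc ⟨M, hM, hMcard⟩ pad unpad⟩

/-- Let `G = (V0 ∪ V1, E)` be bipartite with `|V0| = |V1| = n` and
nonnegative costs `c`, let `0 ≤ d ≤ n`, and suppose `G` has a matching of size `n − d`.
Pad with disjoint sets `D0`, `D1` of `d` new dummy vertices each, adding all edges in
`D0 × V1` and `V0 × D1` of cost `1`. Then the padded graph has a perfect matching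
(a matching of size `n + d`), and its minimum perfect-matching cost equals
`w_{n−d}(G, c) + 2d`. -/
theorem stmt_8 {α : Type*} [DecidableEq α] (V0 V1 D0 D1 : Finset α) (n d : ℕ)
    (hV0card : V0.card = n) (hV1card : V1.card = n)
    (hD0card : D0.card = d) (hD1card : D1.card = d) (hdn : d ≤ n)
    (hV0V1 : Disjoint V0 V1) (hD0V0 : Disjoint D0 V0) (hD0V1 : Disjoint D0 V1)
    (hD1V0 : Disjoint D1 V0) (hD1V1 : Disjoint D1 V1) (hD0D1 : Disjoint D0 D1)
    (E : Finset (α × α)) (hE : E ⊆ V0 ×ˢ V1)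
    (c : α × α → ℝ) (hc : ∀ e ∈ E, 0 ≤ c e)
    -- the padded graph `Ḡ`:
    (Ebar : Finset (α × α)) (hEbar : Ebar = E ∪ D0 ×ˢ V1 ∪ V0 ×ˢ D1)
    (cbar : α × α → ℝ)
    (hcbarE : ∀ e ∈ E, cbar e = c e)
    (hcbarD : ∀ e ∈ D0 ×ˢ V1 ∪ V0 ×ˢ D1, cbar e = 1)
    -- `G` contains a matching of size `n − d`:
    (hmatch : ∃ M : Finset (α × α), IsMatchingIn E M ∧ M.card = n - d) :
    (∃ Mb : Finset (α × α), IsMatchingIn Ebar Mb ∧ Mb.card = n + d) ∧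
      minMatchCost Ebar cbar (n + d) = minMatchCost E c (n - d) + 2 * d :=
  stmt_8_general V0 V1 D0 D1 n d hV0card hV1card hD0card hD1card hdn hD0V0 hD1V1 E hE c hc Ebar
    hEbar cbar hcbarE hcbarD hmatch
end

section
/- Let G = (V0 ∪ V1, E) be a bipartite graph with |V0| = |V1| = n and nonnegative edge costs c, let 0 ≤ d ≤ n, and let Ḡ be the padded bipartite graph with parts V̄0 = V0 ∪ D0, V̄1 = V1 ∪ D1 (D0, D1 disjoint sets of d new dummy vertices each), edge set E together with all pairs in D0 × V1 and V0 × D1, each dummy edge having cost 1. Let 0 ≤ s ≤ d with n − d − s ≥ 0, and let M̄ be any matching in Ḡ of size at least n + d − s. Then the restriction of M̄ to original–original edges is a matching in G of size at least n − d − s, and the total cost of M̄ in Ḡ is at least w_{n−d−s}(G, c) + 2(d − s). -/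
/-!
The edges of `M̄` split into original edges `M`, dummy edges `A ⊆ D0 × V1` and dummy edges
`B ⊆ V0 × D1`. Counting endpoints in `V1`, `V0`, `D0`, `D1` gives `|M| + |A| ≤ n`,
`|M| + |B| ≤ n` and `|A|, |B| ≤ d`; together with `|M| + |A| + |B| ≥ n + d − s` this forces
`|M| ≥ n − d − s` and `|A|, |B| ≥ d − s`. Dummy edges cost `1`, so the cost of `M̄` is
`c(M) + |A| + |B| ≥ c(M) + 2(d − s)`, and since costs are nonnegative, `c(M)` dominates the
cost of any `n − d − s` of its edges, hence `w_{n−d−s}(G, c)`.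
-/

open Finset

theorem Finset.sum_eq_sum_inter_add_sum_inter_add_sum_inter {ι β : Type*} [DecidableEq ι]
    [AddCommMonoid β] {M X Y Z : Finset ι} (hM : M ⊆ X ∪ Y ∪ Z) (hXY : Disjoint X Y)
    (hXZ : Disjoint X Z) (hYZ : Disjoint Y Z) (f : ι → β) :
    ∑ i ∈ M, f i = ∑ i ∈ M ∩ X, f i + ∑ i ∈ M ∩ Y, f i + ∑ i ∈ M ∩ Z, f i := by
  have hdisj : Disjoint (M ∩ X ∪ M ∩ Y) (M ∩ Z) :=
    disjoint_union_left.2 ⟨hXZ.mono inter_subset_right inter_subset_right,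
      hYZ.mono inter_subset_right inter_subset_right⟩
  rw [← sum_union (hXY.mono inter_subset_right inter_subset_right), ← sum_union hdisj,
    ← inter_union_distrib_left, ← inter_union_distrib_left, inter_eq_left.2 hM]

namespace IsMatchingIn

variable {α : Type*} {E M N : Finset (α × α)}

theorem anti (hM : IsMatchingIn E M) (hNM : N ⊆ M) : IsMatchingIn E N :=
  ⟨hNM.trans hM.1, fun p hp q hq => hM.2.1 p (hNM hp) q (hNM hq),
    fun p hp q hq => hM.2.2 p (hNM hp) q (hNM hq)⟩

theorem inter [DecidableEq α] {F : Finset (α × α)} (hM : IsMatchingIn F M) (E : Finset (α × α)) :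
    IsMatchingIn E (M ∩ E) :=
  ⟨inter_subset_right, (hM.anti inter_subset_left).2⟩

theorem card_le_card_left {V W : Finset α} (hM : IsMatchingIn E M) (hMVW : M ⊆ V ×ˢ W) :
    #M ≤ #V :=
  card_le_card_of_injOn Prod.fst (fun _ hp => (mem_product.1 (hMVW hp)).1)
    fun p hp q hq => hM.2.1 p hp q hq

theorem card_le_card_right {V W : Finset α} (hM : IsMatchingIn E M) (hMVW : M ⊆ V ×ˢ W) :
    #M ≤ #W :=
  card_le_card_of_injOn Prod.snd (fun _ hp => (mem_product.1 (hMVW hp)).2)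
    fun p hp q hq => hM.2.2 p hp q hq

end IsMatchingIn

theorem minMatchCost_le_matchCost {α : Type*} {E M : Finset (α × α)} {c : α × α → ℝ} {k : ℕ}
    (hc : ∀ e ∈ E, 0 ≤ c e) (hM : IsMatchingIn E M) (hk : k ≤ #M) :
    minMatchCost E c k ≤ matchCost c M := by
  obtain ⟨N, hNM, hNk⟩ := exists_subset_card_eq hk
  have hbdd : BddBelow {x : ℝ | ∃ M : Finset (α × α), IsMatchingIn E M ∧ #M = k ∧
      x = matchCost c M} := by
    refine ⟨0, ?_⟩
    rintro x ⟨M, hM, -, rfl⟩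
    exact sum_nonneg fun e he => hc e (hM.1 he)
  calc minMatchCost E c k ≤ matchCost c N := csInf_le hbdd ⟨N, hM.anti hNM, hNk, rfl⟩
    _ ≤ matchCost c M := sum_le_sum_of_subset_of_nonneg hNM fun e he _ => hc e (hM.1 he)

section Padded

variable {α : Type*} [DecidableEq α] {V0 V1 D0 D1 : Finset α} {E F M : Finset (α × α)}

theorem sum_eq_sum_inter_add_sum_inter_padded {β : Type*} [AddCommMonoid β]
    (hD0V0 : Disjoint D0 V0) (hD1V1 : Disjoint D1 V1) (hE : E ⊆ V0 ×ˢ V1)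
    (hM : M ⊆ E ∪ D0 ×ˢ V1 ∪ V0 ×ˢ D1) (f : α × α → β) :
    ∑ e ∈ M, f e = ∑ e ∈ M ∩ E, f e + ∑ e ∈ M ∩ D0 ×ˢ V1, f e + ∑ e ∈ M ∩ V0 ×ˢ D1, f e :=
  sum_eq_sum_inter_add_sum_inter_add_sum_inter hM
    ((disjoint_product.2 (.inl hD0V0.symm)).mono_left hE)
    ((disjoint_product.2 (.inr hD1V1.symm)).mono_left hE) (disjoint_product.2 (.inl hD0V0)) f

theorem IsMatchingIn.card_inter_add_card_inter_product_le_right (hM : IsMatchingIn F M)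
    (hD0V0 : Disjoint D0 V0) (hE : E ⊆ V0 ×ˢ V1) :
    #(M ∩ E) + #(M ∩ D0 ×ˢ V1) ≤ #V1 := by
  have hdisj : Disjoint (M ∩ E) (M ∩ D0 ×ˢ V1) :=
    ((disjoint_product.2 (.inl hD0V0.symm)).mono_left hE).mono inter_subset_right
      inter_subset_right
  rw [← card_union_of_disjoint hdisj]
  refine (hM.anti (union_subset inter_subset_left inter_subset_left)).card_le_card_right
    (V := V0 ∪ D0) ?_
  rw [union_product]
  exact union_subset_union (inter_subset_right.trans hE) inter_subset_right

theorem IsMatchingIn.card_inter_add_card_inter_product_le_left (hM : IsMatchingIn F M)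
    (hD1V1 : Disjoint D1 V1) (hE : E ⊆ V0 ×ˢ V1) :
    #(M ∩ E) + #(M ∩ V0 ×ˢ D1) ≤ #V0 := by
  have hdisj : Disjoint (M ∩ E) (M ∩ V0 ×ˢ D1) :=
    ((disjoint_product.2 (.inr hD1V1.symm)).mono_left hE).mono inter_subset_right
      inter_subset_right
  rw [← card_union_of_disjoint hdisj]
  refine (hM.anti (union_subset inter_subset_left inter_subset_left)).card_le_card_left
    (W := V1 ∪ D1) ?_
  rw [product_union]
  exact union_subset_union (inter_subset_right.trans hE) inter_subset_right

end Padded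

theorem stmt_9_general {α : Type*} [DecidableEq α] (V0 V1 D0 D1 : Finset α) (n d s : ℕ)
    (hV0card : V0.card = n) (hV1card : V1.card = n)
    (hD0card : D0.card = d) (hD1card : D1.card = d)
    (hD0V0 : Disjoint D0 V0) (hD1V1 : Disjoint D1 V1)
    (E : Finset (α × α)) (hE : E ⊆ V0 ×ˢ V1)
    (c : α × α → ℝ) (hc : ∀ e ∈ E, 0 ≤ c e)
    -- the padded graph `Ḡ`:
    (Ebar : Finset (α × α)) (hEbar : Ebar = E ∪ D0 ×ˢ V1 ∪ V0 ×ˢ D1)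
    (cbar : α × α → ℝ)
    (hcbarE : ∀ e ∈ E, cbar e = c e)
    (hcbarD : ∀ e ∈ D0 ×ˢ V1 ∪ V0 ×ˢ D1, cbar e = 1)
    -- `M̄` is a matching in `Ḡ` of size at least `n + d − s`:
    (Mbar : Finset (α × α)) (hMbar : IsMatchingIn Ebar Mbar)
    (hMbarcard : n + d - s ≤ Mbar.card) :
    IsMatchingIn E (Mbar ∩ E) ∧
      n - d - s ≤ (Mbar ∩ E).card ∧
      minMatchCost E c (n - d - s) + 2 * ((d : ℝ) - s) ≤ matchCost cbar Mbar := by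
  set M := Mbar ∩ E
  set A := Mbar ∩ D0 ×ˢ V1
  set B := Mbar ∩ V0 ×ˢ D1
  have hsub : Mbar ⊆ E ∪ D0 ×ˢ V1 ∪ V0 ×ˢ D1 := hEbar ▸ hMbar.1
  have hcard : #Mbar = #M + #A + #B := by
    simpa only [card_eq_sum_ones] using
      sum_eq_sum_inter_add_sum_inter_padded hD0V0 hD1V1 hE hsub fun _ => 1
  have hMA : #M + #A ≤ n := hV1card ▸ hMbar.card_inter_add_card_inter_product_le_right hD0V0 hE
  have hMB : #M + #B ≤ n := hV0card ▸ hMbar.card_inter_add_card_inter_product_le_left hD1V1 hE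
  have hA : #A ≤ d :=
    hD0card ▸ (hMbar.anti inter_subset_left).card_le_card_left inter_subset_right
  have hB : #B ≤ d :=
    hD1card ▸ (hMbar.anti inter_subset_left).card_le_card_right inter_subset_right
  have hcost : matchCost cbar Mbar = matchCost c M + #A + #B := by
    rw [matchCost, sum_eq_sum_inter_add_sum_inter_padded hD0V0 hD1V1 hE hsub, matchCost,
      sum_congr rfl fun e he => hcbarE e (mem_of_mem_inter_right he),
      sum_congr rfl fun e he => hcbarD e (mem_union_left _ (mem_of_mem_inter_right he)),
      sum_congr rfl fun e he => hcbarD e (mem_union_right _ (mem_of_mem_inter_right he))]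
    simp only [sum_const, nsmul_eq_mul, mul_one]
    rfl
  have hMcard : n - d - s ≤ #M := by omega
  refine ⟨hMbar.inter E, hMcard, ?_⟩
  have hdA : (d : ℝ) ≤ #A + s := by exact_mod_cast (by omega : d ≤ #A + s)
  have hdB : (d : ℝ) ≤ #B + s := by exact_mod_cast (by omega : d ≤ #B + s)
  linarith [minMatchCost_le_matchCost hc (hMbar.inter E) hMcard]

/-- In the padded graph `Ḡ` (parts `V0 ∪ D0` and `V1 ∪ D1`, edges `E`
plus all dummy edges `D0 × V1` and `V0 × D1` of cost `1`), any matching `M̄` with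
`|M̄| ≥ n + d − s` (where `0 ≤ s ≤ d` and `d + s ≤ n`) restricts to a matching of `G`
on the original–original edges of size at least `n − d − s`, and its total `c̄`-cost is
at least `w_{n−d−s}(G, c) + 2(d − s)`. -/
theorem stmt_9 {α : Type*} [DecidableEq α] (V0 V1 D0 D1 : Finset α) (n d s : ℕ)
    (hV0card : V0.card = n) (hV1card : V1.card = n)
    (hD0card : D0.card = d) (hD1card : D1.card = d) (hdn : d ≤ n)
    (hV0V1 : Disjoint V0 V1) (hD0V0 : Disjoint D0 V0) (hD0V1 : Disjoint D0 V1)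
    (hD1V0 : Disjoint D1 V0) (hD1V1 : Disjoint D1 V1) (hD0D1 : Disjoint D0 D1)
    (E : Finset (α × α)) (hE : E ⊆ V0 ×ˢ V1)
    (c : α × α → ℝ) (hc : ∀ e ∈ E, 0 ≤ c e)
    -- the padded graph `Ḡ`:
    (Ebar : Finset (α × α)) (hEbar : Ebar = E ∪ D0 ×ˢ V1 ∪ V0 ×ˢ D1)
    (cbar : α × α → ℝ)
    (hcbarE : ∀ e ∈ E, cbar e = c e)
    (hcbarD : ∀ e ∈ D0 ×ˢ V1 ∪ V0 ×ˢ D1, cbar e = 1)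
    (hs : s ≤ d) (hds : d + s ≤ n)
    -- `M̄` is a matching in `Ḡ` of size at least `n + d − s`:
    (Mbar : Finset (α × α)) (hMbar : IsMatchingIn Ebar Mbar)
    (hMbarcard : n + d - s ≤ Mbar.card) :
    IsMatchingIn E (Mbar ∩ E) ∧
      n - d - s ≤ (Mbar ∩ E).card ∧
      minMatchCost E c (n - d - s) + 2 * ((d : ℝ) - s) ≤ matchCost cbar Mbar :=
  stmt_9_general V0 V1 D0 D1 n d s hV0card hV1card hD0card hD1card hD0V0 hD1V1 E hE c hc Ebar hEbar
    cbar hcbarE hcbarD Mbar hMbar hMbarcard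
end

section
/- Let G be the complete bipartite graph on parts V0, V1 with |V0| = |V1| = n and nonnegative edge costs c. Let γ > 0 and α, β ≥ 0 satisfy α + 4γ ≤ β ≤ 1, and suppose αn, γn, βn are integers. For ξ ∈ [0,1] let M^ξ denote a minimum-cost matching of size ξn in G; for a matching M and 0 ≤ δ with δn an integer let M_{[δ]} denote the matching obtained from M by removing its δn most expensive edges; let μ(M) denote the maximum edge cost in M; and for w ≥ 0 let G_{≤w} denote the subgraph of G consisting of the edges of cost at most w. Suppose w̄ > 0 satisfies (i) γ·w̄ ≤ μ(M^β_{[γ]}) and (ii) w̄ ≥ μ(M^{α+3γ}_{[2γ]}). Then G_{≤w̄} contains a matching of size (α+γ)n, and the minimum cost of a matching of size (α+γ)n in G_{≤w̄} is at most c(M^β) − γ²·w̄·n. -/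
/-- The maximum edge cost `μ(M)` of a matching `M`. -/
noncomputable def maxEdgeCost {α : Type*} (c : α × α → ℝ) (M : Finset (α × α)) : ℝ :=
  sSup (c '' (M : Set (α × α)))

/-- Let `G` be the complete bipartite graph on parts `V0`, `V1` with
`|V0| = |V1| = n` and nonnegative costs `c`. Let `γ > 0` and `α, β ≥ 0` with
`α + 4γ ≤ β ≤ 1`, where `αn = a`, `γn = g`, `βn = b` are integers. Let `Mβ` be a
minimum-cost matching of size `b = βn` and `Ma` a minimum-cost matching of size
`a + 3g = (α+3γ)n`; let `Mβ'` be obtained from `Mβ` by removing its `g` most expensive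
edges and `Ma'` from `Ma` by removing its `2g` most expensive edges. Suppose `w̄ > 0`
satisfies (i) `γ·w̄ ≤ μ(Mβ')` and (ii) `w̄ ≥ μ(Ma')`. Then `G_{≤w̄}` contains a
matching of size `(α+γ)n = a + g`, and the minimum cost of such a matching is at most
`c(Mβ) − γ²·w̄·n`. -/
theorem stmt_12 {α : Type*} [DecidableEq α] (V0 V1 : Finset α) (n : ℕ)
    (hV0V1 : Disjoint V0 V1) (hV0card : V0.card = n) (hV1card : V1.card = n)
    (c : α × α → ℝ) (hc : ∀ e ∈ V0 ×ˢ V1, 0 ≤ c e)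
    (γ αr βr : ℝ) (hγ : 0 < γ) (hαr : 0 ≤ αr) (hβr : 0 ≤ βr)
    (hαβ : αr + 4 * γ ≤ βr) (hβ1 : βr ≤ 1)
    (a g b : ℕ)
    (ha : (a : ℝ) = αr * n) (hg : (g : ℝ) = γ * n) (hb : (b : ℝ) = βr * n)
    -- `Mβ` is a minimum-cost matching of size `βn = b`:
    (Mβ : Finset (α × α)) (hMβ : IsMatchingIn (V0 ×ˢ V1) Mβ) (hMβcard : Mβ.card = b)
    (hMβmin : ∀ M : Finset (α × α),
      IsMatchingIn (V0 ×ˢ V1) M → M.card = b → matchCost c Mβ ≤ matchCost c M)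
    -- `Ma` is a minimum-cost matching of size `(α+3γ)n = a + 3g`:
    (Ma : Finset (α × α)) (hMa : IsMatchingIn (V0 ×ˢ V1) Ma) (hMacard : Ma.card = a + 3 * g)
    (hMamin : ∀ M : Finset (α × α),
      IsMatchingIn (V0 ×ˢ V1) M → M.card = a + 3 * g → matchCost c Ma ≤ matchCost c M)
    -- `Mβ' = Mβ_{[γ]}`: remove from `Mβ` its `γn = g` most expensive edges:
    (Mβ' : Finset (α × α)) (hMβ'sub : Mβ' ⊆ Mβ) (hMβ'card : Mβ'.card = b - g)
    (hMβ'top : ∀ e ∈ Mβ', ∀ f ∈ Mβ, f ∉ Mβ' → c e ≤ c f)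
    -- `Ma' = Ma_{[2γ]}`: remove from `Ma` its `2γn = 2g` most expensive edges:
    (Ma' : Finset (α × α)) (hMa'sub : Ma' ⊆ Ma) (hMa'card : Ma'.card = a + g)
    (hMa'top : ∀ e ∈ Ma', ∀ f ∈ Ma, f ∉ Ma' → c e ≤ c f)
    -- `w̄ > 0` satisfies (i) and (ii):
    (wbar : ℝ) (hwbar : 0 < wbar)
    (hi : γ * wbar ≤ maxEdgeCost c Mβ')
    (hii : maxEdgeCost c Ma' ≤ wbar)
    -- `E'` is the edge set of `G_{≤w̄}`:
    (E' : Finset (α × α))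
    (hE' : ∀ e : α × α, e ∈ E' ↔ e ∈ V0 ×ˢ V1 ∧ c e ≤ wbar) :
    (∃ M : Finset (α × α), IsMatchingIn E' M ∧ M.card = a + g) ∧
      minMatchCost E' c (a + g) ≤ matchCost c Mβ - γ ^ 2 * wbar * n := by

  -- Mβ' is nonempty (else maxEdgeCost c Mβ' = sSup ∅ = 0 < γ * wbar)
  classical
  have hMβ'ne : Mβ'.Nonempty := by
    rw [Finset.nonempty_iff_ne_empty]
    intro h
    rw [h] at hi
    simp only [maxEdgeCost, Finset.coe_empty, Set.image_empty, Real.sSup_empty] at hi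
    nlinarith
  have hn : 0 < n := by
    by_contra h
    push_neg at h
    interval_cases n
    have hV0 : V0 = ∅ := Finset.card_eq_zero.mp hV0card
    obtain ⟨e, he⟩ := hMβ'ne
    have h2 := hMβ.1 (hMβ'sub he)
    rw [Finset.mem_product] at h2
    simp [hV0] at h2
  have hgpos : 0 < g := by
    have : (0:ℝ) < (g:ℝ) := by rw [hg]; positivity
    exact_mod_cast this
  -- b ≥ a + 4g
  have hbag : a + 4 * g ≤ b := by
    have : ((a + 4 * g : ℕ) : ℝ) ≤ (b : ℝ) := by
      push_cast [ha, hg, hb]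
      nlinarith [Nat.cast_nonneg (α := ℝ) n]
    exact_mod_cast this
  -- nonnegativity of costs on the matchings
  have hcMβ : ∀ e ∈ Mβ, 0 ≤ c e := fun e he => hc e (hMβ.1 he)
  have hcMa : ∀ e ∈ Ma, 0 ≤ c e := fun e he => hc e (hMa.1 he)
  have hMa'ne : Ma'.Nonempty := Finset.card_pos.mp (by rw [hMa'card]; omega)
  -- every edge of Ma' has cost ≤ wbar
  have hMa'w : ∀ e ∈ Ma', c e ≤ wbar := by
    intro e he
    refine le_trans ?_ hii
    exact le_csSup ((Ma'.finite_toSet.image c).bddAbove) ⟨e, he, rfl⟩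
  -- Ma' is a matching in E'
  have hMa'E' : IsMatchingIn E' Ma' := by
    refine ⟨fun e he => (hE' e).mpr ⟨hMa.1 (hMa'sub he), hMa'w e he⟩, ?_, ?_⟩
    · exact fun p hp q hq h => hMa.2.1 p (hMa'sub hp) q (hMa'sub hq) h
    · exact fun p hp q hq h => hMa.2.2 p (hMa'sub hp) q (hMa'sub hq) h
  refine ⟨⟨Ma', hMa'E', hMa'card⟩, ?_⟩
  -- pick N ⊆ Mβ' of size a + 3g
  obtain ⟨N, hNsub, hNcard⟩ := Finset.exists_subset_card_eq
    (show a + 3 * g ≤ Mβ'.card by rw [hMβ'card]; omega)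
  have hNsub' : N ⊆ Mβ := hNsub.trans hMβ'sub
  have hNmatch : IsMatchingIn (V0 ×ˢ V1) N :=
    ⟨fun e he => hMβ.1 (hNsub' he),
     fun p hp q hq h => hMβ.2.1 p (hNsub' hp) q (hNsub' hq) h,
     fun p hp q hq h => hMβ.2.2 p (hNsub' hp) q (hNsub' hq) h⟩
  have h1 : matchCost c Ma ≤ matchCost c N := hMamin N hNmatch hNcard
  have h2 : matchCost c N ≤ matchCost c Mβ' :=
    Finset.sum_le_sum_of_subset_of_nonneg hNsub
      (fun e he _ => hcMβ e (hMβ'sub he))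
  -- the removed edges of Mβ are expensive
  have hexp : ∀ f ∈ Mβ \ Mβ', γ * wbar ≤ c f := by
    intro f hf
    rw [Finset.mem_sdiff] at hf
    refine hi.trans (csSup_le (hMβ'ne.to_set.image c) ?_)
    rintro x ⟨e, he, rfl⟩
    exact hMβ'top e he f hf.1 hf.2
  have hsdcard : (Mβ \ Mβ').card = g := by
    rw [Finset.card_sdiff_of_subset hMβ'sub, hMβcard, hMβ'card]; omega
  have h3 : (g : ℝ) * (γ * wbar) ≤ matchCost c (Mβ \ Mβ') := by
    have := Finset.card_nsmul_le_sum (Mβ \ Mβ') c (γ * wbar) hexp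
    rw [hsdcard] at this
    simpa [nsmul_eq_mul, matchCost] using this
  have hsplit : matchCost c Mβ' + matchCost c (Mβ \ Mβ') = matchCost c Mβ := by
    rw [matchCost, matchCost, matchCost, add_comm]
    exact Finset.sum_sdiff hMβ'sub
  have h4 : matchCost c Ma' ≤ matchCost c Ma :=
    Finset.sum_le_sum_of_subset_of_nonneg hMa'sub (fun e he _ => hcMa e he)
  have h5 : minMatchCost E' c (a + g) ≤ matchCost c Ma' := by
    apply csInf_le
    · refine ⟨0, ?_⟩
      rintro x ⟨M, hM, hMc, rfl⟩
      exact Finset.sum_nonneg fun e he => hc e (((hE' e).mp (hM.1 he)).1)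
    · exact ⟨Ma', hMa'E', hMa'card, rfl⟩
  have hgγ : (g : ℝ) * (γ * wbar) = γ ^ 2 * wbar * n := by
    rw [hg]; ring
  nlinarith [h1, h2, h3, h4, h5, hsplit]
end
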